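/- arXiv:2005.04018 — 2 statements merged into one kernel-verified Lean document; each statement's English description precedes it below -/
import Mathlib

section
/- Existence of MD lex-optimal strategies in the absorbing case: For every stochastic game G and every absorbing lex-objective Ω = (Ω_1,…,Ω_n), there exist memoryless deterministic (MD) lex-optimal strategies for both players; that is, there is an MD strategy σ of Max with inf_τ P_s^{σ,τ}(Ω) = v(s) (in ≤_lex) for all states s, and an MD strategy τ of Min with sup_σ P_s^{σ,τ}(Ω) = v(s) (in ≤_lex) for all states s. -/
open scoped Classical

/-! ### Lexicographic order on vectors -/

/-- `lexLe x y`: `x ≤_lex y`, i.e. `x = y` or `x i < y i` at the first index `i`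
where `x` and `y` differ. -/
def lexLe {n : ℕ} {α : Type*} [LinearOrder α] (x y : Fin n → α) : Prop :=
  x = y ∨ ∃ i, (∀ j, j < i → x j = y j) ∧ x i < y i

/-- Strict lexicographic order. -/
def lexLt {n : ℕ} {α : Type*} [LinearOrder α] (x y : Fin n → α) : Prop :=
  lexLe x y ∧ x ≠ y

/-- `v` is an upper bound of `X` w.r.t. the lexicographic order. -/
def IsLexUB {n : ℕ} {α : Type*} [LinearOrder α] (X : Set (Fin n → α)) (v : Fin n → α) : Prop :=
  ∀ x ∈ X, lexLe x v

def IsLexLB {n : ℕ} {α : Type*} [LinearOrder α] (X : Set (Fin n → α)) (v : Fin n → α) : Prop :=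
  ∀ x ∈ X, lexLe v x

/-- `v` is the least upper bound (supremum) of `X` w.r.t. the lexicographic order. -/
def IsLexLUB {n : ℕ} {α : Type*} [LinearOrder α] (X : Set (Fin n → α)) (v : Fin n → α) : Prop :=
  IsLexUB X v ∧ ∀ u, IsLexUB X u → lexLe v u

/-- `v` is the greatest lower bound (infimum) of `X` w.r.t. the lexicographic order. -/
def IsLexGLB {n : ℕ} {α : Type*} [LinearOrder α] (X : Set (Fin n → α)) (v : Fin n → α) : Prop :=
  IsLexLB X v ∧ ∀ u, IsLexLB X u → lexLe u v

/-! ### Stochastic games -/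

/-- A (simple) stochastic game over a finite state space `S` and a finite label set `L`:
a partition of states into Max-states and Min-states, finitely many available actions
at every state, and a transition probability function. -/
structure SG (S L : Type) [Fintype S] [Fintype L] where
  isMax : S → Prop
  Act : S → Finset L
  act_nonempty : ∀ s, (Act s).Nonempty
  P : S → L → S → ℝ
  P_nonneg : ∀ s a s', 0 ≤ P s a s'
  P_sum : ∀ s, ∀ a ∈ Act s, ∑ s', P s a s' = 1

variable {S L : Type} [Fintype S] [DecidableEq S] [Fintype L] [DecidableEq L]

/-- A (randomized, history-dependent) strategy: a map from finite histories
`(S × L)* × S` to probability distributions over the available actions. -/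
structure Strategy (G : SG S L) where
  prob : List (S × L) → S → L → ℝ
  nonneg : ∀ h s a, 0 ≤ prob h s a
  sum_one : ∀ h s, ∑ a ∈ G.Act s, prob h s a = 1
  supp : ∀ h s a, a ∉ G.Act s → prob h s a = 0

/-- A strategy is memoryless if it only depends on the current state. -/
def Strategy.Memoryless {G : SG S L} (σ : Strategy G) : Prop :=
  ∀ h h' s, σ.prob h s = σ.prob h' s

/-- A strategy is deterministic if every choice is Dirac. -/
def Strategy.Deterministic {G : SG S L} (σ : Strategy G) : Prop :=
  ∀ h s, ∃ a, σ.prob h s a = 1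

/-- Memoryless deterministic strategies. -/
def Strategy.MD {G : SG S L} (σ : Strategy G) : Prop :=
  σ.Memoryless ∧ σ.Deterministic

/-- The probability that action `a` is played at state `s` after history `h`
when Max plays `σ` and Min plays `τ`. -/
noncomputable def stepProb (G : SG S L) (σ τ : Strategy G) (h : List (S × L)) (s : S)
    (a : L) : ℝ :=
  if G.isMax s then σ.prob h s a else τ.prob h s a

/-- Probability, in the Markov chain induced by `σ` and `τ`, of reaching the set `T`
within `k` steps, starting at state `s` with history `h`. -/
noncomputable def reachAux (G : SG S L) (σ τ : Strategy G) (T : Finset S) :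
    ℕ → List (S × L) → S → ℝ
  | 0, _, s => if s ∈ T then 1 else 0
  | k + 1, h, s =>
      if s ∈ T then 1
      else ∑ a ∈ G.Act s, stepProb G σ τ h s a *
        ∑ s', G.P s a s' * reachAux G σ τ T k (h ++ [(s, a)]) s'

/-- `P_{h,s}^{σ,τ}(Reach T)`: the probability of the reachability property `Reach T`
(the measure of the set of infinite paths that eventually visit `T`), obtained as the
supremum of the step-bounded reachability probabilities. -/
noncomputable def PReach (G : SG S L) (σ τ : Strategy G) (T : Finset S)
    (h : List (S × L)) (s : S) : ℝ :=
  ⨆ k : ℕ, reachAux G σ τ T k h s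

/-- Probability of `A Until t` (reach `t` while only visiting states of `A` before)
within `k` steps. -/
noncomputable def untilAux (G : SG S L) (σ τ : Strategy G) (A : Finset S) (t : S) :
    ℕ → List (S × L) → S → ℝ
  | 0, _, s => if s = t then 1 else 0
  | k + 1, h, s =>
      if s = t then 1
      else if s ∈ A then
        ∑ a ∈ G.Act s, stepProb G σ τ h s a *
          ∑ s', G.P s a s' * untilAux G σ τ A t k (h ++ [(s, a)]) s'
      else 0

/-- `P_{h,s}^{σ,τ}(A Until t)`. -/
noncomputable def PUntil (G : SG S L) (σ τ : Strategy G) (A : Finset S) (t : S)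
    (h : List (S × L)) (s : S) : ℝ :=
  ⨆ k : ℕ, untilAux G σ τ A t k h s

/-- Objectives: reachability `Reach T`, safety `Safe T`, and their quantified
versions given by a weight function `q` on a target set `S'`. -/
inductive Obj (S : Type) where
  | reach (T : Finset S)
  | safe (T : Finset S)
  | qreach (S' : Finset S) (q : S → ℝ)
  | qsafe (S' : Finset S) (q : S → ℝ)

/-- The target set of an objective. -/
def Obj.targets {S : Type} : Obj S → Finset S
  | .reach T => T
  | .safe T => T
  | .qreach S' _ => S'
  | .qsafe S' _ => S'

/-- Plain (non-quantified) objectives: `Reach T` or `Safe T`. -/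
def Obj.Plain {S : Type} : Obj S → Prop
  | .reach _ => True
  | .safe _ => True
  | _ => False

/-- Reachability-type objectives. -/
def Obj.IsReach {S : Type} : Obj S → Prop
  | .reach _ => True
  | .qreach _ _ => True
  | _ => False

/-- `P_{h,s}^{σ,τ}(Ω)` for a single objective `Ω`. -/
noncomputable def objProb (G : SG S L) (σ τ : Strategy G) (h : List (S × L)) (s : S) :
    Obj S → ℝ
  | .reach T => PReach G σ τ T h s
  | .safe T => 1 - PReach G σ τ T h s
  | .qreach S' q => ∑ t ∈ S', PUntil G σ τ S'ᶜ t h s * q t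
  | .qsafe S' q => 1 - ∑ t ∈ S', PUntil G σ τ S'ᶜ t h s * q t

/-- The vector `(P_{h,s}^{σ,τ}(Ω_1),…,P_{h,s}^{σ,τ}(Ω_n))`. -/
noncomputable def payoff (G : SG S L) {n : ℕ} (Ω : Fin n → Obj S) (σ τ : Strategy G)
    (h : List (S × L)) (s : S) : Fin n → ℝ :=
  fun i => objProb G σ τ h s (Ω i)

/-- The set of payoff vectors achievable by Min against a fixed `σ` from state `s`. -/
def minPayoffs (G : SG S L) {n : ℕ} (Ω : Fin n → Obj S) (σ : Strategy G) (s : S) :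
    Set (Fin n → ℝ) :=
  {y | ∃ τ : Strategy G, y = payoff G Ω σ τ [] s}

/-- The set of payoff vectors achievable by Max against a fixed `τ` from state `s`. -/
def maxPayoffs (G : SG S L) {n : ℕ} (Ω : Fin n → Obj S) (τ : Strategy G) (s : S) :
    Set (Fin n → ℝ) :=
  {y | ∃ σ : Strategy G, y = payoff G Ω σ τ [] s}

/-- `v` is the (lower) lex-value `sup_σ inf_τ P_s^{σ,τ}(Ω)` of state `s`, where the
suprema and infima are taken w.r.t. the lexicographic order. -/
def IsLexValue (G : SG S L) {n : ℕ} (Ω : Fin n → Obj S) (s : S) (v : Fin n → ℝ) : Prop :=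
  IsLexLUB {x | ∃ σ : Strategy G, IsLexGLB (minPayoffs G Ω σ s) x} v

/-- `v` is the upper lex-value `inf_τ sup_σ P_s^{σ,τ}(Ω)` of state `s`. -/
def IsLexValueUpper (G : SG S L) {n : ℕ} (Ω : Fin n → Obj S) (s : S) (v : Fin n → ℝ) :
    Prop :=
  IsLexGLB {x | ∃ τ : Strategy G, IsLexLUB (maxPayoffs G Ω τ s) x} v

/-- `σ` is a lex-optimal strategy of Max: from every state `s` (with empty history) it
guarantees the lex-value `v s` against every strategy of Min,
i.e. `inf_τ P_s^{σ,τ}(Ω) = v s` in the lexicographic order. -/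
def MaxOptimal (G : SG S L) {n : ℕ} (Ω : Fin n → Obj S) (σ : Strategy G)
    (v : S → Fin n → ℝ) : Prop :=
  ∀ s, IsLexGLB (minPayoffs G Ω σ s) (v s)

/-- `τ` is a lex-optimal strategy of Min: `sup_σ P_s^{σ,τ}(Ω) = v s`. -/
def MinOptimal (G : SG S L) {n : ℕ} (Ω : Fin n → Obj S) (τ : Strategy G)
    (v : S → Fin n → ℝ) : Prop :=
  ∀ s, IsLexLUB (maxPayoffs G Ω τ s) (v s)

/-- `τ` is a lex-optimal counter-strategy against `σ`:
`P_s^{σ,τ}(Ω) = inf_{τ'} P_s^{σ,τ'}(Ω)` for every `s`. -/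
def OptimalCounter (G : SG S L) {n : ℕ} (Ω : Fin n → Obj S) (σ τ : Strategy G) : Prop :=
  ∀ s, IsLexGLB (minPayoffs G Ω σ s) (payoff G Ω σ τ [] s)

/-- A state is absorbing (a sink) if all its actions self-loop with probability 1. -/
def SG.Absorbing (G : SG S L) (s : S) : Prop := ∀ a ∈ G.Act s, G.P s a s = 1

/-- A lex-objective is absorbing if all its target sets consist of sinks only. -/
def AbsorbingObj (G : SG S L) {n : ℕ} (Ω : Fin n → Obj S) : Prop :=
  ∀ i, ∀ t ∈ (Ω i).targets, G.Absorbing t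

/-- The lex-value of action `a` at state `s`: `v(s,a) = Σ_{s'} P(s,a,s')·v(s')`. -/
noncomputable def actionVal (G : SG S L) {n : ℕ} (v : S → Fin n → ℝ) (s : S) (a : L) :
    Fin n → ℝ :=
  fun i => ∑ s', G.P s a s' * v s' i

/-- Action `a` is lex-optimal at `s`: its lex-value is maximal among the available
actions if `s` is a Max-state, and minimal if `s` is a Min-state. -/
def OptAction (G : SG S L) {n : ℕ} (v : S → Fin n → ℝ) (s : S) (a : L) : Prop :=
  (G.isMax s → ∀ b ∈ G.Act s, lexLe (actionVal G v s b) (actionVal G v s a)) ∧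
  (¬ G.isMax s → ∀ b ∈ G.Act s, lexLe (actionVal G v s a) (actionVal G v s b))

/-- A strategy of Max is locally lex-optimal if at Max-states it only assigns positive
probability to lex-optimal actions. -/
def LocallyOptMax (G : SG S L) {n : ℕ} (v : S → Fin n → ℝ) (σ : Strategy G) : Prop :=
  ∀ h s a, G.isMax s → 0 < σ.prob h s a → OptAction G v s a

/-- A strategy of Min is locally lex-optimal if at Min-states it only assigns positive
probability to lex-optimal actions. -/
def LocallyOptMin (G : SG S L) {n : ℕ} (v : S → Fin n → ℝ) (τ : Strategy G) : Prop :=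
  ∀ h s a, ¬ G.isMax s → 0 < τ.prob h s a → OptAction G v s a

/-- `Zero_i = {s ∈ S : v_i(s) = 0}`. -/
noncomputable def zeroSet {n : ℕ} (v : S → Fin n → ℝ) (i : Fin n) : Finset S :=
  Finset.univ.filter (fun s => v s i = 0)

/-- The final set `F = ⋃_{k∈R} S_k ∪ ⋂_{k∈R} Zero_k`, where `R` is the set of indices
of reachability objectives (with `F = S` when `R = ∅`). -/
noncomputable def finalSet {n : ℕ} (Ω : Fin n → Obj S) (v : S → Fin n → ℝ) : Finset S :=
  ((Finset.univ.filter (fun i => (Ω i).IsReach)).biUnion fun i => (Ω i).targets) ∪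
    Finset.univ.filter fun s => ∀ i, (Ω i).IsReach → v s i = 0

/-!
For `ε > 0` the lex-objective is scalarized into the single state reward
`r_ε = ∑ i, ε ^ i • r_i`, where `r_i` is the indicator of the target set of `Ω i` (or of its
complement for safety). Since the targets are sinks, `P(Ω i) = lim_k E[r_i(X_k)]`.

For a discount factor `γ < 1`, the Bellman operator `w ↦ r + γ • (one-step optimum of w)` is a
contraction; choosing at every state an action attaining the optimum for its fixed point gives a
single memoryless deterministic choice function which, played by both players, is a saddle point
of the `γ`-discounted game. There are only finitely many choice functions, so one of them is
such a saddle point for `γ` arbitrarily close to `1`, and Abel's theorem turns this into a saddle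
point for the long-run reward `lim_k E[r_ε(X_k)]`. By finiteness again one choice function works
for `ε` arbitrarily close to `0`, where the order of the scalarizations `∑ i, ε ^ i * x i`
decides the lexicographic order. Its payoff is then the lex-value, and it is lex-optimal for
both players.
-/

set_option linter.unusedSectionVars false

open Filter Topology

section Lex

variable {n : ℕ}

theorem lexLe_iff_toLex_le {α : Type*} [LinearOrder α] {x y : Fin n → α} :
    lexLe x y ↔ toLex x ≤ toLex y := by
  rw [le_iff_lt_or_eq, or_comm, toLex_inj]
  rfl

theorem lexLe_trans {α : Type*} [LinearOrder α] {x y z : Fin n → α} (hxy : lexLe x y)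
    (hyz : lexLe y z) : lexLe x z := by
  rw [lexLe_iff_toLex_le] at *
  exact hxy.trans hyz

noncomputable def scalarize (ε : ℝ) (x : Fin n → ℝ) : ℝ :=
  ∑ i : Fin n, ε ^ (i : ℕ) * x i

theorem eventually_scalarize_lt_of_toLex_lt {x y : Fin n → ℝ} (hxy : toLex x < toLex y) :
    ∀ᶠ ε in 𝓝[>] 0, scalarize ε x < scalarize ε y := by
  obtain ⟨i₀, heq, hlt⟩ := hxy
  set d : Fin n → ℝ := y - x
  have hd : ∀ i, i < i₀ → d i = 0 := fun i hi => sub_eq_zero.2 (heq i hi).symm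
  set q : ℝ → ℝ := fun ε => ∑ i : Fin n, ε ^ ((i : ℕ) - i₀) * d i
  have hq0 : q 0 = d i₀ := by
    simp only [q]
    rw [Finset.sum_eq_single i₀ (fun i _ hi => ?_) (by simp)]
    · simp
    rcases lt_or_gt_of_ne hi with hi | hi
    · simp [hd i hi]
    · simp [Nat.sub_ne_zero_of_lt (show (i₀ : ℕ) < i from hi)]
  have hq : ∀ᶠ ε in 𝓝 0, 0 < q ε :=
    continuousAt_const.eventually_lt (show Continuous q by fun_prop).continuousAt
      (by rw [hq0]; exact sub_pos.2 hlt)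
  have hscal : ∀ ε, scalarize ε y - scalarize ε x = ε ^ (i₀ : ℕ) * q ε := by
    intro ε
    simp only [scalarize, q, ← Finset.sum_sub_distrib, Finset.mul_sum, ← mul_sub]
    refine Finset.sum_congr rfl fun i _ => ?_
    rcases lt_or_ge i i₀ with hi | hi
    · rw [show y i - x i = d i from rfl, hd i hi]
      ring
    · rw [← mul_assoc, ← pow_add, Nat.add_sub_cancel' (show (i₀ : ℕ) ≤ i from hi)]
      rfl
  filter_upwards [nhdsWithin_le_nhds hq, self_mem_nhdsWithin] with ε hqε hε
  linarith [hscal ε, mul_pos (pow_pos (show (0 : ℝ) < ε from hε) (i₀ : ℕ)) hqε]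

theorem lexLe_of_frequently_scalarize_le {x y : Fin n → ℝ}
    (h : ∃ᶠ ε in 𝓝[>] 0, scalarize ε x ≤ scalarize ε y) : lexLe x y := by
  rw [lexLe_iff_toLex_le]
  by_contra! hyx
  exact h ((eventually_scalarize_lt_of_toLex_lt hyx).mono fun _ h => h.not_ge)

end Lex

theorem Filter.exists_frequently_eq {α β : Type*} [Finite β] {l : Filter α} [l.NeBot]
    (f : α → β) : ∃ b, ∃ᶠ x in l, f x = b := by
  by_contra! h
  obtain ⟨x, hx⟩ := (Filter.eventually_all.2 h).exists
  exact hx (f x) rfl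

theorem one_sub_mul_tsum_mul_pow {c : ℕ → ℝ} {C x : ℝ} (hC : ∀ j, |c j| ≤ C) (hx : |x| < 1) :
    (1 - x) * ∑' j, c j * x ^ j = ∑' j, (c j - if j = 0 then 0 else c (j - 1)) * x ^ j := by
  have hsum : ∀ {g : ℕ → ℝ}, (∀ j, |g j| ≤ C * |x| ^ j) → Summable g := fun hg =>
    Summable.of_norm_bounded ((summable_geometric_of_lt_one (abs_nonneg x) hx).mul_left C) hg
  have hcx : Summable fun j => c j * x ^ j :=
    hsum fun j => by rw [abs_mul, abs_pow]; gcongr; exact hC j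
  have hshift : Summable fun j => (if j = 0 then 0 else c (j - 1)) * x ^ j := by
    refine hsum fun j => ?_
    rcases j with _ | j
    · simpa using (abs_nonneg _).trans (hC 0)
    · simp only [add_tsub_cancel_right, abs_mul, abs_pow, if_neg j.succ_ne_zero, pow_succ]
      exact mul_le_mul_of_nonneg_right (hC j) (by positivity)
  simp only [sub_mul]
  rw [hcx.tsum_sub hshift, hshift.tsum_eq_zero_add]
  simp only [if_pos, add_tsub_cancel_right, if_neg (Nat.succ_ne_zero _), pow_succ, ← mul_assoc]
  rw [tsum_mul_right]
  ring

theorem tendsto_one_sub_mul_tsum_mul_pow {c : ℕ → ℝ} {l : ℝ} (hc : Tendsto c atTop (𝓝 l)) :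
    Tendsto (fun x => (1 - x) * ∑' j, c j * x ^ j) (𝓝[<] 1) (𝓝 l) := by
  have hpartial :
      ∀ m, ∑ j ∈ Finset.range (m + 1), (c j - if j = 0 then 0 else c (j - 1)) = c m := by
    intro m
    induction m with
    | zero => simp
    | succ m ih => rw [Finset.sum_range_succ, ih]; simp
  have hlim : Tendsto (fun m => ∑ j ∈ Finset.range m, (c j - if j = 0 then 0 else c (j - 1)))
      atTop (𝓝 l) := by
    rw [← Filter.tendsto_add_atTop_iff_nat 1]
    simpa only [hpartial] using hc
  obtain ⟨C, hC⟩ := isBounded_iff_forall_norm_le.1 (Metric.isBounded_range_of_tendsto c hc)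
  refine (Real.tendsto_tsum_powerSeries_nhdsWithin_lt hlim).congr' ?_
  filter_upwards [Ioo_mem_nhdsLT (show (-1 : ℝ) < 1 by norm_num)] with x hx
  exact (one_sub_mul_tsum_mul_pow (fun j => hC _ ⟨j, rfl⟩) (abs_lt.2 hx)).symm

namespace SG

variable {G : SG S L}

theorem sum_P_mul_const {s : S} {a : L} (ha : a ∈ G.Act s) (c : ℝ) :
    ∑ s', G.P s a s' * c = c := by
  rw [← Finset.sum_mul, G.P_sum s a ha, one_mul]

theorem sum_P_mul_of_absorbing {s : S} (hs : G.Absorbing s) {a : L} (ha : a ∈ G.Act s)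
    (X : S → ℝ) : ∑ s', G.P s a s' * X s' = X s := by
  have hrest : ∑ s' ∈ Finset.univ.erase s, G.P s a s' = 0 := by
    have := Finset.add_sum_erase Finset.univ (G.P s a) (Finset.mem_univ s)
    rw [G.P_sum s a ha, hs a ha] at this
    linarith
  rw [Finset.sum_eq_single s, hs a ha, one_mul]
  · intro s' _ hs'
    rw [(Finset.sum_eq_zero_iff_of_nonneg fun t _ => G.P_nonneg s a t).1 hrest s'
      (Finset.mem_erase.2 ⟨hs', Finset.mem_univ s'⟩), zero_mul]
  · simp

end SG

section Markov

variable {G : SG S L} (σ τ : Strategy G)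

theorem stepProb_nonneg (h : List (S × L)) (s : S) (a : L) : 0 ≤ stepProb G σ τ h s a := by
  unfold stepProb
  split_ifs
  exacts [σ.nonneg h s a, τ.nonneg h s a]

theorem sum_stepProb (h : List (S × L)) (s : S) : ∑ a ∈ G.Act s, stepProb G σ τ h s a = 1 := by
  unfold stepProb
  split_ifs
  exacts [σ.sum_one h s, τ.sum_one h s]

variable (G) in
noncomputable def stepAvg (σ τ : Strategy G) (h : List (S × L)) (s : S) (F : L → S → ℝ) : ℝ :=
  ∑ a ∈ G.Act s, stepProb G σ τ h s a * ∑ s', G.P s a s' * F a s'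

variable {σ τ} {h : List (S × L)} {s : S}

theorem stepAvg_mono {F F' : L → S → ℝ} (hF : ∀ a s', F a s' ≤ F' a s') :
    stepAvg G σ τ h s F ≤ stepAvg G σ τ h s F' := by
  unfold stepAvg
  gcongr with a _ s'
  · exact stepProb_nonneg σ τ h s a
  · exact G.P_nonneg s a s'
  · exact hF a s'

theorem stepAvg_le {F : L → S → ℝ} {c : ℝ}
    (hF : ∀ a ∈ G.Act s, ∑ s', G.P s a s' * F a s' ≤ c) : stepAvg G σ τ h s F ≤ c :=
  calc stepAvg G σ τ h s F ≤ ∑ a ∈ G.Act s, stepProb G σ τ h s a * c := by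
        unfold stepAvg
        gcongr with a ha
        exacts [stepProb_nonneg σ τ h s a, hF a ha]
    _ = c := by rw [← Finset.sum_mul, sum_stepProb, one_mul]

theorem le_stepAvg {F : L → S → ℝ} {c : ℝ}
    (hF : ∀ a ∈ G.Act s, c ≤ ∑ s', G.P s a s' * F a s') : c ≤ stepAvg G σ τ h s F :=
  calc c = ∑ a ∈ G.Act s, stepProb G σ τ h s a * c := by
        rw [← Finset.sum_mul, sum_stepProb, one_mul]
    _ ≤ stepAvg G σ τ h s F := by
        unfold stepAvg
        gcongr with a ha
        exacts [stepProb_nonneg σ τ h s a, hF a ha]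

theorem stepAvg_const (c : ℝ) : stepAvg G σ τ h s (fun _ _ => c) = c :=
  le_antisymm (stepAvg_le fun _ ha => (G.sum_P_mul_const ha c).le)
    (le_stepAvg fun _ ha => (G.sum_P_mul_const ha c).ge)

theorem stepAvg_add (F F' : L → S → ℝ) :
    stepAvg G σ τ h s (fun a s' => F a s' + F' a s') =
      stepAvg G σ τ h s F + stepAvg G σ τ h s F' := by
  simp only [stepAvg, mul_add, Finset.sum_add_distrib]

theorem stepAvg_const_mul (c : ℝ) (F : L → S → ℝ) :
    stepAvg G σ τ h s (fun a s' => c * F a s') = c * stepAvg G σ τ h s F := by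
  simp only [stepAvg, Finset.mul_sum]
  exact Finset.sum_congr rfl fun _ _ => Finset.sum_congr rfl fun _ _ => by ring

theorem stepAvg_sum {ι : Type*} (u : Finset ι) (F : ι → L → S → ℝ) :
    stepAvg G σ τ h s (fun a s' => ∑ i ∈ u, F i a s') = ∑ i ∈ u, stepAvg G σ τ h s (F i) := by
  simp only [stepAvg, Finset.mul_sum]
  rw [Finset.sum_comm (s := u)]
  exact Finset.sum_congr rfl fun _ _ => Finset.sum_comm

theorem stepAvg_of_absorbing (hs : G.Absorbing s) {F : L → S → ℝ} {c : ℝ}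
    (hF : ∀ a ∈ G.Act s, F a s = c) : stepAvg G σ τ h s F = c :=
  le_antisymm (stepAvg_le fun a ha => by rw [G.sum_P_mul_of_absorbing hs ha, hF a ha])
    (le_stepAvg fun a ha => by rw [G.sum_P_mul_of_absorbing hs ha, hF a ha])

variable (G σ τ) in
/-- `stateDist G σ τ k h s t` is the probability of being at `t` after `k` steps from `s` with
history `h`. -/
noncomputable def stateDist : ℕ → List (S × L) → S → S → ℝ
  | 0, _, s => Pi.single s 1
  | k + 1, h, s => fun t => stepAvg G σ τ h s fun a s' => stateDist k (h ++ [(s, a)]) s' t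

theorem stateDist_zero_dotProduct (r : S → ℝ) : stateDist G σ τ 0 h s ⬝ᵥ r = r s := by
  simp [stateDist, single_dotProduct]

theorem stateDist_succ_dotProduct (k : ℕ) (r : S → ℝ) :
    stateDist G σ τ (k + 1) h s ⬝ᵥ r =
      stepAvg G σ τ h s fun a s' => stateDist G σ τ k (h ++ [(s, a)]) s' ⬝ᵥ r := by
  simp only [dotProduct, stateDist, stepAvg_sum]
  refine Finset.sum_congr rfl fun t _ => ?_
  rw [mul_comm, ← stepAvg_const_mul]
  simp only [mul_comm]

theorem stateDist_dotProduct_mono {r r' : S → ℝ} (hr : r ≤ r') :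
    ∀ k h s, stateDist G σ τ k h s ⬝ᵥ r ≤ stateDist G σ τ k h s ⬝ᵥ r' := by
  intro k
  induction k with
  | zero => intro h s; simpa only [stateDist_zero_dotProduct] using hr s
  | succ k ih =>
    intro h s
    simp only [stateDist_succ_dotProduct]
    exact stepAvg_mono fun a s' => ih _ s'

theorem stateDist_dotProduct_const (c : ℝ) :
    ∀ k h s, stateDist G σ τ k h s ⬝ᵥ (fun _ => c) = c := by
  intro k
  induction k with
  | zero => intro h s; exact stateDist_zero_dotProduct _
  | succ k ih =>
    intro h s
    simp only [stateDist_succ_dotProduct, ih, stepAvg_const]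

theorem abs_stateDist_dotProduct_le (r : S → ℝ) (k : ℕ) :
    |stateDist G σ τ k h s ⬝ᵥ r| ≤ ‖r‖ := by
  rw [abs_le]
  constructor
  · simpa only [stateDist_dotProduct_const] using stateDist_dotProduct_mono
      (r := fun _ => -‖r‖) (fun t => neg_le_of_abs_le (norm_le_pi_norm r t)) k h s
  · simpa only [stateDist_dotProduct_const] using stateDist_dotProduct_mono
      (r' := fun _ => ‖r‖) (fun t => le_of_abs_le (norm_le_pi_norm r t)) k h s

theorem stateDist_dotProduct_of_absorbing (hs : G.Absorbing s) (r : S → ℝ) :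
    ∀ k h, stateDist G σ τ k h s ⬝ᵥ r = r s := by
  intro k
  induction k with
  | zero => intro h; exact stateDist_zero_dotProduct r
  | succ k ih =>
    intro h
    rw [stateDist_succ_dotProduct]
    exact stepAvg_of_absorbing hs fun a _ => ih _

variable (σ τ) {T : Finset S}

theorem reachAux_succ_of_notMem (hs : s ∉ T) (k : ℕ) :
    reachAux G σ τ T (k + 1) h s =
      stepAvg G σ τ h s fun a s' => reachAux G σ τ T k (h ++ [(s, a)]) s' := by
  simp only [reachAux, if_neg hs]
  rfl

theorem reachAux_le_succ :
    ∀ k h s, reachAux G σ τ T k h s ≤ reachAux G σ τ T (k + 1) h s := by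
  intro k
  induction k with
  | zero =>
    intro h s
    by_cases hs : s ∈ T
    · simp [reachAux, hs]
    · rw [show reachAux G σ τ T 0 h s = 0 from if_neg hs, reachAux_succ_of_notMem σ τ hs]
      refine le_stepAvg fun a _ => Finset.sum_nonneg fun s' _ => mul_nonneg (G.P_nonneg s a s') ?_
      simp only [reachAux]
      split_ifs <;> norm_num
  | succ k ih =>
    intro h s
    by_cases hs : s ∈ T
    · simp [reachAux, hs]
    · rw [reachAux_succ_of_notMem σ τ hs, reachAux_succ_of_notMem σ τ hs]
      exact stepAvg_mono fun a s' => ih _ s'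

theorem reachAux_eq_stateDist_dotProduct (hT : ∀ t ∈ T, G.Absorbing t) :
    ∀ k h s, reachAux G σ τ T k h s = stateDist G σ τ k h s ⬝ᵥ (T : Set S).indicator 1 := by
  intro k
  induction k with
  | zero => intro h s; simp [reachAux, stateDist_zero_dotProduct, Set.indicator_apply]
  | succ k ih =>
    intro h s
    by_cases hs : s ∈ T
    · rw [stateDist_dotProduct_of_absorbing (hT s hs)]
      simp [reachAux, hs]
    · rw [reachAux_succ_of_notMem σ τ hs, stateDist_succ_dotProduct]
      simp only [ih]

theorem tendsto_reachAux_PReach (hT : ∀ t ∈ T, G.Absorbing t) :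
    Tendsto (fun k => reachAux G σ τ T k h s) atTop (𝓝 (PReach G σ τ T h s)) := by
  refine tendsto_atTop_ciSup (monotone_nat_of_le_succ fun k => reachAux_le_succ σ τ k h s)
    ⟨1, ?_⟩
  rintro _ ⟨k, rfl⟩
  dsimp only
  rw [reachAux_eq_stateDist_dotProduct σ τ hT,
    ← stateDist_dotProduct_const (σ := σ) (τ := τ) 1 k h s]
  exact stateDist_dotProduct_mono
    (Set.indicator_le' (fun _ _ => le_rfl) fun _ _ => zero_le_one) k h s

/-- The state reward whose long-run expectation is the probability of a plain objective;
quantitative objectives get the junk reward `0`. -/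
noncomputable def Obj.reward : Obj S → S → ℝ
  | .reach T => (T : Set S).indicator 1
  | .safe T => 1 - (T : Set S).indicator 1
  | .qreach _ _ | .qsafe _ _ => 0

theorem tendsto_stateDist_dotProduct_reward {o : Obj S} (ho : o.Plain)
    (habs : ∀ t ∈ o.targets, G.Absorbing t) :
    Tendsto (fun k => stateDist G σ τ k h s ⬝ᵥ o.reward) atTop (𝓝 (objProb G σ τ h s o)) := by
  cases o with
  | reach T =>
    refine (tendsto_reachAux_PReach σ τ habs).congr fun k => ?_
    exact reachAux_eq_stateDist_dotProduct σ τ habs k h s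
  | safe T =>
    refine ((tendsto_reachAux_PReach σ τ habs).const_sub 1).congr fun k => ?_
    rw [Obj.reward, dotProduct_sub, reachAux_eq_stateDist_dotProduct σ τ habs]
    congr
    exact (stateDist_dotProduct_const (σ := σ) (τ := τ) 1 k h s).symm
  | qreach | qsafe => exact ho.elim

variable {n : ℕ}

noncomputable def lexReward (Ω : Fin n → Obj S) (ε : ℝ) : S → ℝ :=
  ∑ i : Fin n, ε ^ (i : ℕ) • (Ω i).reward

theorem tendsto_stateDist_dotProduct_lexReward {Ω : Fin n → Obj S}
    (hplain : ∀ i, (Ω i).Plain) (habs : AbsorbingObj G Ω) (ε : ℝ) :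
    Tendsto (fun k => stateDist G σ τ k h s ⬝ᵥ lexReward Ω ε) atTop
      (𝓝 (scalarize ε (payoff G Ω σ τ h s))) := by
  simp only [lexReward, dotProduct_sum, dotProduct_smul, smul_eq_mul, scalarize, payoff]
  exact tendsto_finsetSum _ fun i _ =>
    (tendsto_stateDist_dotProduct_reward σ τ (hplain i) (habs i)).const_mul _

end Markov

namespace SG

variable (G : SG S L)

noncomputable def stepMean (w : S → ℝ) (s : S) (a : L) : ℝ :=
  ∑ s', G.P s a s' * w s'

noncomputable def optMean (w : S → ℝ) (s : S) : ℝ :=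
  if G.isMax s then (G.Act s).sup' (G.act_nonempty s) (G.stepMean w s)
  else (G.Act s).inf' (G.act_nonempty s) (G.stepMean w s)

variable {G}

theorem stepMean_le_add_dist (w w' : S → ℝ) {s : S} {a : L} (ha : a ∈ G.Act s) :
    G.stepMean w s a ≤ G.stepMean w' s a + dist w w' :=
  calc G.stepMean w s a ≤ ∑ s', G.P s a s' * (w' s' + dist w w') := by
        unfold stepMean
        gcongr with s'
        · exact G.P_nonneg s a s'
        · have := dist_le_pi_dist w w' s'
          rw [Real.dist_eq] at this
          linarith [le_abs_self (w s' - w' s')]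
    _ = G.stepMean w' s a + dist w w' := by
        simp only [stepMean, mul_add, Finset.sum_add_distrib, sum_P_mul_const ha]

theorem optMean_le_add_dist (w w' : S → ℝ) (s : S) :
    G.optMean w s ≤ G.optMean w' s + dist w w' := by
  unfold optMean
  split_ifs
  · refine Finset.sup'_le _ _ fun a ha => (stepMean_le_add_dist w w' ha).trans ?_
    gcongr
    exact Finset.le_sup' _ ha
  · obtain ⟨a, ha, he⟩ := Finset.exists_mem_eq_inf' (G.act_nonempty s) (G.stepMean w' s)
    rw [he]
    exact (Finset.inf'_le _ ha).trans (stepMean_le_add_dist w w' ha)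

theorem exists_fixedPoint_optMean (r : S → ℝ) {γ : ℝ} (hγ0 : 0 ≤ γ) (hγ1 : γ < 1) :
    ∃ w : S → ℝ, ∀ s, w s = r s + γ * G.optMean w s := by
  have hcontr : ContractingWith γ.toNNReal fun w s => r s + γ * G.optMean w s := by
    refine ⟨Real.toNNReal_lt_one.2 hγ1, LipschitzWith.of_dist_le_mul fun w w' => ?_⟩
    rw [Real.coe_toNNReal γ hγ0]
    refine (dist_pi_le_iff (by positivity)).2 fun s => ?_
    rw [Real.dist_eq, add_sub_add_left_eq_sub, ← mul_sub, abs_mul, abs_of_nonneg hγ0]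
    gcongr
    rw [abs_sub_le_iff]
    constructor
    · linarith [optMean_le_add_dist (G := G) w w' s]
    · linarith [optMean_le_add_dist (G := G) w' w s, dist_comm w w']
  exact ⟨_, fun s => (congrFun hcontr.fixedPoint_isFixedPt s).symm⟩

theorem exists_stepMean_eq_optMean (w : S → ℝ) :
    ∃ c : ∀ s, G.Act s, ∀ s, G.stepMean w s (c s) = G.optMean w s := by
  have : ∀ s, ∃ a : G.Act s, G.stepMean w s a = G.optMean w s := by
    intro s
    unfold optMean
    split_ifs
    · obtain ⟨a, ha, he⟩ := Finset.exists_mem_eq_sup' (G.act_nonempty s) (G.stepMean w s)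
      exact ⟨⟨a, ha⟩, he.symm⟩
    · obtain ⟨a, ha, he⟩ := Finset.exists_mem_eq_inf' (G.act_nonempty s) (G.stepMean w s)
      exact ⟨⟨a, ha⟩, he.symm⟩
  exact Classical.skolem.1 this

end SG

section OfChoice

variable {G : SG S L}

noncomputable def Strategy.ofChoice (c : ∀ s, G.Act s) : Strategy G where
  prob _ s a := if a = c s then 1 else 0
  nonneg _ s a := by split_ifs <;> norm_num
  sum_one _ s := by simp [Finset.sum_ite_eq', (c s).2]
  supp _ s a ha := if_neg fun hac => ha (by rw [hac]; exact (c s).2)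

theorem Strategy.ofChoice_MD (c : ∀ s, G.Act s) : (Strategy.ofChoice c).MD :=
  ⟨fun _ _ _ => rfl, fun _ s => ⟨c s, if_pos rfl⟩⟩

variable {c : ∀ s, G.Act s} {σ τ : Strategy G} {h : List (S × L)} {s : S}

theorem sum_ofChoice_prob_mul (X : L → ℝ) :
    ∑ a ∈ G.Act s, (Strategy.ofChoice c).prob h s a * X a = X (c s) := by
  simp [Strategy.ofChoice, Finset.sum_ite_eq', (c s).2]

theorem stepAvg_ofChoice_left (hs : G.isMax s) (F : L → S → ℝ) :
    stepAvg G (Strategy.ofChoice c) τ h s F = ∑ s', G.P s (c s) s' * F (c s) s' := by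
  simp only [stepAvg, stepProb, if_pos hs, sum_ofChoice_prob_mul]

theorem stepAvg_ofChoice_right (hs : ¬ G.isMax s) (F : L → S → ℝ) :
    stepAvg G σ (Strategy.ofChoice c) h s F = ∑ s', G.P s (c s) s' * F (c s) s' := by
  simp only [stepAvg, stepProb, if_neg hs, sum_ofChoice_prob_mul]

theorem optMean_le_stepAvg_ofChoice {w : S → ℝ}
    (hc : ∀ s, G.stepMean w s (c s) = G.optMean w s) (τ : Strategy G) (h : List (S × L))
    (s : S) : G.optMean w s ≤ stepAvg G (Strategy.ofChoice c) τ h s fun _ s' => w s' := by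
  by_cases hs : G.isMax s
  · rw [stepAvg_ofChoice_left hs, ← hc s]
    rfl
  · refine le_stepAvg fun a ha => ?_
    rw [SG.optMean, if_neg hs]
    exact Finset.inf'_le _ ha

theorem stepAvg_ofChoice_le_optMean {w : S → ℝ}
    (hc : ∀ s, G.stepMean w s (c s) = G.optMean w s) (σ : Strategy G) (h : List (S × L))
    (s : S) : (stepAvg G σ (Strategy.ofChoice c) h s fun _ s' => w s') ≤ G.optMean w s := by
  by_cases hs : G.isMax s
  · refine stepAvg_le fun a ha => ?_
    rw [SG.optMean, if_pos hs]
    exact Finset.le_sup' (G.stepMean w s) ha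
  · rw [stepAvg_ofChoice_right hs, ← hc s]
    rfl

end OfChoice

section Discounted

variable {G : SG S L} {σ τ : Strategy G} {r w : S → ℝ} {γ : ℝ}

theorem stepAvg_neg {h : List (S × L)} {s : S} (F : L → S → ℝ) :
    (stepAvg G σ τ h s fun a s' => -F a s') = -stepAvg G σ τ h s F := by
  simpa using stepAvg_const_mul (σ := σ) (τ := τ) (h := h) (s := s) (-1) F

theorem le_discountedSum_of_le_stepAvg (hγ : 0 ≤ γ)
    (hw : ∀ h s, w s ≤ r s + γ * stepAvg G σ τ h s fun _ s' => w s') :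
    ∀ k h s, w s ≤ ∑ j ∈ Finset.range k, (stateDist G σ τ j h s ⬝ᵥ r) * γ ^ j +
      (stateDist G σ τ k h s ⬝ᵥ w) * γ ^ k := by
  intro k
  induction k with
  | zero => intro h s; simp [stateDist_zero_dotProduct]
  | succ k ih =>
    intro h s
    calc w s ≤ r s + γ * stepAvg G σ τ h s fun _ s' => w s' := hw h s
      _ ≤ r s + γ * stepAvg G σ τ h s fun a s' =>
            ∑ j ∈ Finset.range k, (stateDist G σ τ j (h ++ [(s, a)]) s' ⬝ᵥ r) * γ ^ j +
              (stateDist G σ τ k (h ++ [(s, a)]) s' ⬝ᵥ w) * γ ^ k := by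
          gcongr
          exact stepAvg_mono fun a s' => ih _ s'
      _ = _ := by
          simp only [stepAvg_add, stepAvg_sum, mul_comm _ (γ ^ _), stepAvg_const_mul,
            ← stateDist_succ_dotProduct, Finset.sum_range_succ' _ k, stateDist_zero_dotProduct,
            pow_succ]
          simp only [mul_add, Finset.mul_sum]
          ring_nf

variable (G) in
noncomputable def discPayoff (σ τ : Strategy G) (r : S → ℝ) (γ : ℝ) (h : List (S × L))
    (s : S) : ℝ :=
  ∑' j, (stateDist G σ τ j h s ⬝ᵥ r) * γ ^ j

theorem tendsto_discountedSum (hγ0 : 0 ≤ γ) (hγ1 : γ < 1) (h : List (S × L)) (s : S) :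
    Tendsto (fun k => ∑ j ∈ Finset.range k, (stateDist G σ τ j h s ⬝ᵥ r) * γ ^ j +
      (stateDist G σ τ k h s ⬝ᵥ w) * γ ^ k) atTop (𝓝 (discPayoff G σ τ r γ h s)) := by
  have hbound : ∀ (v : S → ℝ) k, ‖(stateDist G σ τ k h s ⬝ᵥ v) * γ ^ k‖ ≤ ‖v‖ * γ ^ k :=
    fun v k => by
      rw [Real.norm_eq_abs, abs_mul, abs_pow, abs_of_nonneg hγ0]
      gcongr
      exact abs_stateDist_dotProduct_le v k
  have hsum := Summable.of_norm_bounded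
    ((summable_geometric_of_lt_one hγ0 hγ1).mul_left ‖r‖) (hbound r)
  have htail : Tendsto (fun k => (stateDist G σ τ k h s ⬝ᵥ w) * γ ^ k) atTop (𝓝 0) :=
    squeeze_zero_norm (hbound w) (by
      simpa using (tendsto_pow_atTop_nhds_zero_of_lt_one hγ0 hγ1).const_mul ‖w‖)
  simpa only [add_zero, discPayoff] using hsum.hasSum.tendsto_sum_nat.add htail

theorem le_discPayoff (hγ0 : 0 ≤ γ) (hγ1 : γ < 1)
    (hw : ∀ h s, w s ≤ r s + γ * stepAvg G σ τ h s fun _ s' => w s')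
    (h : List (S × L)) (s : S) : w s ≤ discPayoff G σ τ r γ h s :=
  ge_of_tendsto (tendsto_discountedSum hγ0 hγ1 h s)
    (Eventually.of_forall fun k => le_discountedSum_of_le_stepAvg hγ0 hw k h s)

theorem discPayoff_le (hγ0 : 0 ≤ γ) (hγ1 : γ < 1)
    (hw : ∀ h s, r s + γ * (stepAvg G σ τ h s fun _ s' => w s') ≤ w s)
    (h : List (S × L)) (s : S) : discPayoff G σ τ r γ h s ≤ w s := by
  have := le_discPayoff (r := -r) (w := -w) hγ0 hγ1 (fun h s => by
    simp only [Pi.neg_apply, stepAvg_neg]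
    linarith [hw h s]) h s
  simp only [discPayoff, dotProduct_neg, neg_mul, tsum_neg, Pi.neg_apply] at this
  unfold discPayoff
  linarith

theorem exists_ofChoice_discPayoff_saddle (r : S → ℝ) (hγ0 : 0 ≤ γ) (hγ1 : γ < 1) :
    ∃ c : ∀ s, G.Act s, ∀ σ τ h s, discPayoff G σ (Strategy.ofChoice c) r γ h s ≤
      discPayoff G (Strategy.ofChoice c) τ r γ h s := by
  obtain ⟨w, hw⟩ := G.exists_fixedPoint_optMean r hγ0 hγ1
  obtain ⟨c, hc⟩ := G.exists_stepMean_eq_optMean w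
  refine ⟨c, fun σ τ h s => (discPayoff_le (w := w) hγ0 hγ1 (fun h s => ?_) h s).trans
    (le_discPayoff hγ0 hγ1 (fun h s => ?_) h s)⟩
  · rw [hw s]
    gcongr
    exact stepAvg_ofChoice_le_optMean hc σ h s
  · rw [hw s]
    gcongr
    exact optMean_le_stepAvg_ofChoice hc τ h s

theorem exists_ofChoice_limit_saddle (r : S → ℝ) :
    ∃ c : ∀ s, G.Act s, ∀ (σ τ : Strategy G) (s : S) {a b : ℝ},
      Tendsto (fun k => stateDist G σ (Strategy.ofChoice c) k [] s ⬝ᵥ r) atTop (𝓝 a) →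
      Tendsto (fun k => stateDist G (Strategy.ofChoice c) τ k [] s ⬝ᵥ r) atTop (𝓝 b) →
      a ≤ b := by
  have hsaddle : ∀ γ : ℝ, ∃ c : ∀ s, G.Act s, γ ∈ Set.Ico 0 1 → ∀ σ τ h s,
      discPayoff G σ (Strategy.ofChoice c) r γ h s ≤
        discPayoff G (Strategy.ofChoice c) τ r γ h s := by
    intro γ
    by_cases hγ : γ ∈ Set.Ico (0 : ℝ) 1
    · obtain ⟨c, hc⟩ := exists_ofChoice_discPayoff_saddle (G := G) r hγ.1 hγ.2
      exact ⟨c, fun _ => hc⟩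
    · exact ⟨fun s => ⟨_, (G.act_nonempty s).choose_spec⟩, fun h => absurd h hγ⟩
  choose c hc using hsaddle
  obtain ⟨c₀, hfreq⟩ := Filter.exists_frequently_eq (l := 𝓝[<] (1 : ℝ)) c
  refine ⟨c₀, fun σ τ s a b ha hb => le_of_tendsto_of_tendsto_of_frequently
    (tendsto_one_sub_mul_tsum_mul_pow ha) (tendsto_one_sub_mul_tsum_mul_pow hb) ?_⟩
  refine (hfreq.and_eventually (Ico_mem_nhdsLT (by norm_num : (0 : ℝ) < 1))).mono
    fun γ ⟨hcγ, hγ⟩ => ?_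
  have := hc γ hγ σ τ [] s
  rw [hcγ] at this
  exact mul_le_mul_of_nonneg_left this (sub_nonneg.2 hγ.2.le)

end Discounted

theorem exists_ofChoice_lex_saddle {G : SG S L} {n : ℕ} {Ω : Fin n → Obj S}
    (hplain : ∀ i, (Ω i).Plain) (habs : AbsorbingObj G Ω) :
    ∃ c : ∀ s, G.Act s, ∀ σ τ s, lexLe (payoff G Ω σ (Strategy.ofChoice c) [] s)
      (payoff G Ω (Strategy.ofChoice c) τ [] s) := by
  choose c hc using fun ε => exists_ofChoice_limit_saddle (G := G) (lexReward Ω ε)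
  obtain ⟨c₀, hfreq⟩ := Filter.exists_frequently_eq (l := 𝓝[>] (0 : ℝ)) c
  refine ⟨c₀, fun σ τ s => lexLe_of_frequently_scalarize_le (hfreq.mono fun ε hε => ?_)⟩
  rw [← hε]
  exact hc ε σ τ s (tendsto_stateDist_dotProduct_lexReward _ _ hplain habs ε)
    (tendsto_stateDist_dotProduct_lexReward _ _ hplain habs ε)

theorem md_lex_optimal_exists_general {S L : Type} [Fintype S] [DecidableEq S]
    [Fintype L] (G : SG S L) {n : ℕ} (Ω : Fin n → Obj S)
    (hplain : ∀ i, (Ω i).Plain) (habs : AbsorbingObj G Ω) :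
    ∃ v : S → Fin n → ℝ, (∀ s, IsLexValue G Ω s (v s)) ∧
      (∃ σ : Strategy G, σ.MD ∧ MaxOptimal G Ω σ v) ∧
      (∃ τ : Strategy G, τ.MD ∧ MinOptimal G Ω τ v) := by
  obtain ⟨c, hc⟩ := exists_ofChoice_lex_saddle hplain habs
  set π := Strategy.ofChoice c
  have hmax : MaxOptimal G Ω π fun s => payoff G Ω π π [] s := fun s =>
    ⟨fun _ ⟨τ, hτ⟩ => hτ ▸ hc π τ s, fun _ hu => hu _ ⟨π, rfl⟩⟩
  have hmin : MinOptimal G Ω π fun s => payoff G Ω π π [] s := fun s =>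
    ⟨fun _ ⟨σ, hσ⟩ => hσ ▸ hc σ π s, fun _ hu => hu _ ⟨π, rfl⟩⟩
  refine ⟨_, fun s => ⟨?_, fun _ hu => hu _ ⟨π, hmax s⟩⟩, ⟨π, Strategy.ofChoice_MD c, hmax⟩,
    ⟨π, Strategy.ofChoice_MD c, hmin⟩⟩
  rintro x ⟨σ, hσ⟩
  exact lexLe_trans (hσ.1 _ ⟨π, rfl⟩) (hc σ π s)

/-- **Existence of MD lex-optimal strategies in the absorbing case.**
For every SG `G` and every absorbing lex-objective `Ω`, the lex-value `v` exists and
there are memoryless deterministic lex-optimal strategies for both players: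
an MD strategy `σ` of Max with `inf_τ P_s^{σ,τ}(Ω) = v s` (w.r.t. `≤_lex`) for all `s`,
and an MD strategy `τ` of Min with `sup_σ P_s^{σ,τ}(Ω) = v s` for all `s`. -/
theorem md_lex_optimal_exists {S L : Type} [Fintype S] [DecidableEq S] [Nonempty S]
    [Fintype L] [DecidableEq L] (G : SG S L) {n : ℕ} (Ω : Fin n → Obj S)
    (hplain : ∀ i, (Ω i).Plain) (habs : AbsorbingObj G Ω) :
    ∃ v : S → Fin n → ℝ, (∀ s, IsLexValue G Ω s (v s)) ∧
      (∃ σ : Strategy G, σ.MD ∧ MaxOptimal G Ω σ v) ∧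
      (∃ τ : Strategy G, τ.MD ∧ MinOptimal G Ω τ v) :=
  md_lex_optimal_exists_general G Ω hplain habs
end

section
/- Unique fixpoint characterization of reachability probabilities in finite Markov chains: Let (S, P) be a Markov chain on a finite state space S and let T ⊆ S. Then the function v(s) = P_s(Reach(T)) is the unique function x : S → [0,1] satisfying: x(s) = 1 for all s ∈ T; x(s) = 0 for all s from which T is not reachable in the directed graph on S with an edge from s to s' whenever P(s,s') > 0; and x(s) = Σ_{s'} P(s,s')·x(s') for all remaining s. -/
/-! The truncated probabilities `reachAux T k` increase to `PReach T`, and the one-step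
equation for them passes to the limit, so `PReach T` solves the system. For uniqueness,
the difference `y` of two solutions vanishes on `T` and on the states that cannot reach `T`,
and is harmonic elsewhere. If `|y|` had a positive maximum, it would be attained at a state
that can reach `T`; a convex combination can only reach the maximum if all of its
positive-weight terms do, so the maximum propagates along the path into `T`, where `y = 0`. -/

open scoped Classical

/-- A Markov chain on a state space `S`: a transition function whose rows are
probability distributions. -/
structure MC (S : Type) where
  P : S → S → ℝ
  nonneg : ∀ s s', 0 ≤ P s s'
  sum_one : ∀ s, HasSum (P s) 1

/-- Probability of reaching `T` from `s` within `k` steps. -/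
noncomputable def MC.reachAux {S : Type} (M : MC S) (T : Set S) : ℕ → S → ℝ
  | 0, s => if s ∈ T then 1 else 0
  | k + 1, s => if s ∈ T then 1 else ∑' s', M.P s s' * M.reachAux T k s'

/-- `P_s(Reach T)`: the probability (under the path measure of the Markov chain
started at `s`) of the set of infinite paths that eventually visit `T`, obtained as
the supremum of the step-bounded reachability probabilities. -/
noncomputable def MC.PReach {S : Type} (M : MC S) (T : Set S) (s : S) : ℝ :=
  ⨆ k : ℕ, M.reachAux T k s

/-- `T` is reachable from `s` in the directed graph of positive-probability
transitions. -/
def MC.Reachable {S : Type} (M : MC S) (s : S) (T : Set S) : Prop :=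
  ∃ t ∈ T, Relation.ReflTransGen (fun u u' => 0 < M.P u u') s t

open Finset Relation

namespace MC

variable {S : Type} (M : MC S) (T : Set S)

theorem reachAux_of_mem {s : S} (hs : s ∈ T) (k : ℕ) : M.reachAux T k s = 1 := by
  cases k <;> simp [reachAux, hs]

theorem PReach_of_mem {s : S} (hs : s ∈ T) : M.PReach T s = 1 := by
  simp [PReach, M.reachAux_of_mem T hs]

theorem not_mem_of_not_reachable {s : S} (hs : ¬ M.Reachable s T) : s ∉ T :=
  fun h => hs ⟨s, h, .refl⟩

theorem not_reachable_of_pos {s s' : S} (hs : ¬ M.Reachable s T) (hP : 0 < M.P s s') :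
    ¬ M.Reachable s' T :=
  fun ⟨t, ht, hs't⟩ => hs ⟨t, ht, .head hP hs't⟩

theorem reachAux_nonneg (k : ℕ) (s : S) : 0 ≤ M.reachAux T k s := by
  induction k generalizing s with
  | zero => simp only [reachAux]; split <;> norm_num
  | succ k ih =>
    simp only [reachAux]
    split
    · exact zero_le_one
    · exact tsum_nonneg fun s' => mul_nonneg (M.nonneg s s') (ih s')

theorem reachAux_eq_zero_of_not_reachable (k : ℕ) {s : S} (hs : ¬ M.Reachable s T) :
    M.reachAux T k s = 0 := by
  induction k generalizing s with
  | zero => simp [reachAux, M.not_mem_of_not_reachable T hs]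
  | succ k ih =>
    have hterm (s' : S) : M.P s s' * M.reachAux T k s' = 0 := by
      rcases (M.nonneg s s').eq_or_lt with hP | hP
      · rw [← hP, zero_mul]
      · rw [ih (M.not_reachable_of_pos T hs hP), mul_zero]
    simp [reachAux, M.not_mem_of_not_reachable T hs, hterm]

theorem PReach_eq_zero_of_not_reachable {s : S} (hs : ¬ M.Reachable s T) :
    M.PReach T s = 0 := by
  simp [PReach, fun k => M.reachAux_eq_zero_of_not_reachable T k hs]

section Finite

variable [Fintype S]

theorem sum_P (s : S) : ∑ s', M.P s s' = 1 :=
  ((M.sum_one s).unique (hasSum_fintype _)).symm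

theorem reachAux_succ_of_not_mem {s : S} (hs : s ∉ T) (k : ℕ) :
    M.reachAux T (k + 1) s = ∑ s', M.P s s' * M.reachAux T k s' := by
  simp [reachAux, hs, tsum_fintype]

theorem reachAux_le_one (k : ℕ) (s : S) : M.reachAux T k s ≤ 1 := by
  induction k generalizing s with
  | zero => simp only [reachAux]; split <;> norm_num
  | succ k ih =>
    by_cases hs : s ∈ T
    · exact (M.reachAux_of_mem T hs _).le
    calc M.reachAux T (k + 1) s = ∑ s', M.P s s' * M.reachAux T k s' :=
          M.reachAux_succ_of_not_mem T hs k
      _ ≤ ∑ s', M.P s s' * 1 :=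
          sum_le_sum fun s' _ => mul_le_mul_of_nonneg_left (ih s') (M.nonneg s s')
      _ = 1 := by simp [M.sum_P]

theorem reachAux_le_succ (k : ℕ) (s : S) : M.reachAux T k s ≤ M.reachAux T (k + 1) s := by
  induction k generalizing s with
  | zero =>
    by_cases hs : s ∈ T
    · simp [M.reachAux_of_mem T hs]
    · simpa [reachAux, hs] using M.reachAux_nonneg T 1 s
  | succ k ih =>
    by_cases hs : s ∈ T
    · simp [M.reachAux_of_mem T hs]
    rw [M.reachAux_succ_of_not_mem T hs, M.reachAux_succ_of_not_mem T hs]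
    exact sum_le_sum fun s' _ => mul_le_mul_of_nonneg_left (ih s') (M.nonneg s s')

theorem bddAbove_range_reachAux (s : S) : BddAbove (Set.range fun k => M.reachAux T k s) :=
  ⟨1, Set.forall_mem_range.2 fun k => M.reachAux_le_one T k s⟩

theorem tendsto_reachAux (s : S) :
    Filter.Tendsto (M.reachAux T · s) Filter.atTop (nhds (M.PReach T s)) :=
  tendsto_atTop_ciSup (monotone_nat_of_le_succ (M.reachAux_le_succ T · s))
    (M.bddAbove_range_reachAux T s)

theorem PReach_mem_Icc (s : S) : M.PReach T s ∈ Set.Icc (0 : ℝ) 1 :=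
  ⟨le_ciSup_of_le (M.bddAbove_range_reachAux T s) 0 (M.reachAux_nonneg T 0 s),
    ciSup_le fun k => M.reachAux_le_one T k s⟩

theorem PReach_eq_sum_of_not_mem {s : S} (hs : s ∉ T) :
    M.PReach T s = ∑ s', M.P s s' * M.PReach T s' := by
  have hlim : Filter.Tendsto (fun k => ∑ s', M.P s s' * M.reachAux T k s') Filter.atTop
      (nhds (∑ s', M.P s s' * M.PReach T s')) :=
    tendsto_finsetSum _ fun s' _ => (M.tendsto_reachAux T s').const_mul _
  have hshift := (M.tendsto_reachAux T s).comp (Filter.tendsto_add_atTop_nat 1)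
  simp only [Function.comp_def, M.reachAux_succ_of_not_mem T hs] at hshift
  exact tendsto_nhds_unique hshift hlim

theorem abs_eq_of_abs_eq_max {y : S → ℝ} {c : ℝ} (hc : ∀ u, |y u| ≤ c) {s t : S}
    (hs : |y s| = c) (hy : y s = ∑ u, M.P s u * y u) (hP : 0 < M.P s t) : |y t| = c := by
  have hterm : ∀ u ∈ univ, 0 ≤ M.P s u * (c - |y u|) :=
    fun u _ => mul_nonneg (M.nonneg s u) (sub_nonneg.2 (hc u))
  have hsum : ∑ u, M.P s u * (c - |y u|) ≤ 0 := by
    calc ∑ u, M.P s u * (c - |y u|) = |y s| - ∑ u, M.P s u * |y u| := by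
          simp only [mul_sub, sum_sub_distrib, ← sum_mul, M.sum_P, one_mul, hs]
      _ ≤ 0 := by
          rw [sub_nonpos, hy]
          refine (abs_sum_le_sum_abs _ _).trans_eq (sum_congr rfl fun u _ => ?_)
          rw [abs_mul, abs_of_nonneg (M.nonneg s u)]
  have hzero := (sum_eq_zero_iff_of_nonneg hterm).1 (hsum.antisymm (sum_nonneg hterm)) t
    (mem_univ t)
  rcases mul_eq_zero.1 hzero with h | h
  · exact absurd h hP.ne'
  · linarith

theorem abs_eq_max_of_reflTransGen {y : S → ℝ} {c : ℝ} (hc : ∀ u, |y u| ≤ c)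
    (hy : ∀ s, |y s| = c → y s = ∑ u, M.P s u * y u) {s t : S}
    (hst : ReflTransGen (fun u u' => 0 < M.P u u') s t) (hs : |y s| = c) : |y t| = c := by
  induction hst with
  | refl => exact hs
  | tail _ hP ih => exact M.abs_eq_of_abs_eq_max hc ih (hy _ ih) hP

theorem eq_zero_of_harmonic {y : S → ℝ} (hT : ∀ s ∈ T, y s = 0)
    (hU : ∀ s, ¬ M.Reachable s T → y s = 0)
    (hF : ∀ s, s ∉ T → M.Reachable s T → y s = ∑ s', M.P s s' * y s') : y = 0 := by
  funext s₀
  by_contra hs₀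
  have : Nonempty S := ⟨s₀⟩
  obtain ⟨m, hm⟩ := Finite.exists_max fun s => |y s|
  have hpos : 0 < |y m| := (abs_pos.2 hs₀).trans_le (hm s₀)
  have hharm (s : S) (hs : |y s| = |y m|) : y s = ∑ u, M.P s u * y u := by
    have hys : y s ≠ 0 := abs_pos.1 (hs ▸ hpos)
    exact hF s (fun h => hys (hT s h)) (by_contra fun h => hys (hU s h))
  obtain ⟨t, ht, hmt⟩ : M.Reachable m T := by_contra fun h => hpos.ne' (by simp [hU m h])
  have := M.abs_eq_max_of_reflTransGen hm hharm hmt rfl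
  rw [hT t ht, abs_zero] at this
  exact hpos.ne this

end Finite

end MC

/-- **Unique fixpoint characterization of reachability probabilities in finite MCs.**
For a Markov chain on a finite state space and `T ⊆ S`, the function
`v(s) = P_s(Reach T)` is the unique `[0,1]`-valued function `x` with `x = 1` on `T`,
`x = 0` on the states from which `T` is not reachable, and
`x(s) = Σ_{s'} P(s,s')·x(s')` for all remaining states `s`. -/
theorem reach_prob_unique_fixpoint {S : Type} [Fintype S] (M : MC S) (T : Set S) :
    ((∀ s, M.PReach T s ∈ Set.Icc (0 : ℝ) 1) ∧
      (∀ s ∈ T, M.PReach T s = 1) ∧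
      (∀ s, ¬ M.Reachable s T → M.PReach T s = 0) ∧
      (∀ s, s ∉ T → M.Reachable s T → M.PReach T s = ∑' s', M.P s s' * M.PReach T s')) ∧
    ∀ x : S → ℝ,
      ((∀ s, x s ∈ Set.Icc (0 : ℝ) 1) ∧
        (∀ s ∈ T, x s = 1) ∧
        (∀ s, ¬ M.Reachable s T → x s = 0) ∧
        (∀ s, s ∉ T → M.Reachable s T → x s = ∑' s', M.P s s' * x s')) →
      x = M.PReach T := by
  refine ⟨⟨M.PReach_mem_Icc T, fun s => M.PReach_of_mem T,
    fun s => M.PReach_eq_zero_of_not_reachable T,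
    fun s hs _ => by rw [tsum_fintype, M.PReach_eq_sum_of_not_mem T hs]⟩, ?_⟩
  rintro x ⟨-, hxT, hxU, hxF⟩
  refine sub_eq_zero.1 (M.eq_zero_of_harmonic T (fun s hs => ?_) (fun s hs => ?_) ?_)
  · simp [hxT s hs, M.PReach_of_mem T hs]
  · simp [hxU s hs, M.PReach_eq_zero_of_not_reachable T hs]
  · intro s hs hr
    simp only [Pi.sub_apply, mul_sub, sum_sub_distrib]
    rw [hxF s hs hr, tsum_fintype, ← M.PReach_eq_sum_of_not_mem T hs]
end
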